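/- Let G be a group, let L ≤ H be finite subgroups of G, and let g ∈ G satisfy g² ∈ L. Assume |L : L ∩ L^g| = |H : H ∩ H^g| = 4 and L ∩ L^g ≠ L ∩ H^g (the pseudocover condition of Theorem 1.2). Then L ∩ L^g < L ∩ H^g < H ∩ H^g is a chain of proper inclusions, so |H ∩ H^g| ≥ 4·|L ∩ L^g| and hence |H| ≥ 16·|L ∩ L^g| ≥ 16. -/

import Mathlib

/-!
Write `A = L ∩ L^g`, `B = L ∩ H^g`, `C = H ∩ H^g`, so `A ≤ B ≤ C` and `A ≠ B` by hypothesis.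
Since `g² ∈ H`, conjugation by `g` is an involution on subgroups containing `g²`, and it
swaps `H` and `H^g`, so it fixes `C`. If `B = C`, then `B` is fixed too, i.e.
`L ∩ H^g = L^g ∩ H ≤ L^g`, forcing `B ≤ A`. Hence `A < B < C`; each proper inclusion of
finite groups has index at least `2`, so `4 |A| ≤ |C|`, and `|H| = 4 |C|`.
-/

/-- The conjugate subgroup `H^g = g⁻¹ H g`. -/
def conjSG {G : Type*} [Group G] (H : Subgroup G) (g : G) : Subgroup G :=
  Subgroup.comap (MulAut.conj g).toMonoidHom H

namespace Subgroup

variable {G : Type*} [Group G] {A B C : Subgroup G}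

theorem card_mul_relIndex (h : A ≤ B) : Nat.card A * A.relIndex B = Nat.card B := by
  rw [← relIndex_bot_left, ← relIndex_bot_left, relIndex_mul_relIndex ⊥ A B bot_le h]

theorem finite_of_le [Finite B] (h : A ≤ B) : Finite A :=
  Finite.of_injective _ (inclusion_injective h)

theorem two_le_relIndex_of_lt [Finite B] (h : A < B) : 2 ≤ A.relIndex B := by
  have hpos : 0 < A.relIndex B := Nat.pos_of_dvd_of_pos (relIndex_dvd_card A B) Nat.card_pos
  have hne : A.relIndex B ≠ 1 := by
    rw [Ne, relIndex_eq_one]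
    exact h.not_ge
  omega

theorem four_mul_card_le_of_lt_of_lt [Finite C] (hAB : A < B) (hBC : B < C) :
    4 * Nat.card A ≤ Nat.card C := by
  have : Finite B := finite_of_le hBC.le
  calc 4 * Nat.card A = Nat.card A * (2 * 2) := by ring
    _ ≤ Nat.card A * (A.relIndex B * B.relIndex C) := by
      gcongr
      exacts [two_le_relIndex_of_lt hAB, two_le_relIndex_of_lt hBC]
    _ = Nat.card C := by
      rw [relIndex_mul_relIndex A B C hAB.le hBC.le, card_mul_relIndex (hAB.trans hBC).le]

end Subgroup

section Conjugation

variable {G : Type*} [Group G] {L H : Subgroup G} {g : G}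

theorem mem_conjSG {x : G} : x ∈ conjSG H g ↔ g * x * g⁻¹ ∈ H := by
  simp [conjSG, Subgroup.mem_comap]

theorem conjSG_mono (h : L ≤ H) (g : G) : conjSG L g ≤ conjSG H g :=
  Subgroup.comap_mono h

theorem conjSG_inf (L H : Subgroup G) (g : G) :
    conjSG (L ⊓ H) g = conjSG L g ⊓ conjSG H g :=
  Subgroup.comap_inf _ _ _

theorem conjSG_conjSG_of_sq_mem (h : g ^ 2 ∈ H) : conjSG (conjSG H g) g = H := by
  ext x
  have hx : g * (g * x * g⁻¹) * g⁻¹ = g ^ 2 * x * (g ^ 2)⁻¹ := by rw [pow_two]; group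
  rw [mem_conjSG, mem_conjSG, hx, mul_assoc, H.mul_mem_cancel_left h,
    H.mul_mem_cancel_right (H.inv_mem h)]

theorem conjSG_inf_conjSG_self_of_sq_mem (h : g ^ 2 ∈ H) :
    conjSG (H ⊓ conjSG H g) g = H ⊓ conjSG H g := by
  rw [conjSG_inf, conjSG_conjSG_of_sq_mem h, inf_comm]

theorem inf_conjSG_lt_of_ne (hLH : L ≤ H) (hg : g ^ 2 ∈ H)
    (hne : L ⊓ conjSG L g ≠ L ⊓ conjSG H g) :
    L ⊓ conjSG H g < H ⊓ conjSG H g := by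
  refine (inf_le_inf_right _ hLH).lt_of_ne fun hEq => hne ?_
  have hfixed : conjSG (L ⊓ conjSG H g) g = L ⊓ conjSG H g := by
    rw [hEq]
    exact conjSG_inf_conjSG_self_of_sq_mem hg
  refine le_antisymm (inf_le_inf_left L (conjSG_mono hLH g)) (le_inf inf_le_left ?_)
  calc L ⊓ conjSG H g = conjSG (L ⊓ conjSG H g) g := hfixed.symm
    _ ≤ conjSG L g := conjSG_mono inf_le_left g

end Conjugation

theorem pseudocover_stabilizer_bound_general {G : Type*} [Group G] (L H : Subgroup G) (hLH : L ≤ H)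
    (hHfin : (H : Set G).Finite)
    (g : G) (hg2 : g ^ 2 ∈ L)
    (hvalH : (conjSG H g).relIndex H = 4)
    (hne : L ⊓ conjSG L g ≠ L ⊓ conjSG H g) :
    (L ⊓ conjSG L g < L ⊓ conjSG H g ∧ L ⊓ conjSG H g < H ⊓ conjSG H g) ∧
    4 * Nat.card (L ⊓ conjSG L g : Subgroup G) ≤ Nat.card (H ⊓ conjSG H g : Subgroup G) ∧
    16 * Nat.card (L ⊓ conjSG L g : Subgroup G) ≤ Nat.card H ∧
    16 ≤ Nat.card H := by
  have hAB : L ⊓ conjSG L g < L ⊓ conjSG H g :=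
    (inf_le_inf_left L (conjSG_mono hLH g)).lt_of_ne hne
  have hBC : L ⊓ conjSG H g < H ⊓ conjSG H g := inf_conjSG_lt_of_ne hLH (hLH hg2) hne
  have : Finite H := hHfin.to_subtype
  have : Finite (H ⊓ conjSG H g : Subgroup G) := Subgroup.finite_of_le inf_le_left
  have : Finite (L ⊓ conjSG L g : Subgroup G) := Subgroup.finite_of_le (hAB.trans hBC).le
  have hAC : 4 * Nat.card (L ⊓ conjSG L g : Subgroup G) ≤
      Nat.card (H ⊓ conjSG H g : Subgroup G) :=
    Subgroup.four_mul_card_le_of_lt_of_lt hAB hBC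
  have hCH : Nat.card (H ⊓ conjSG H g : Subgroup G) * 4 = Nat.card H := by
    rw [← hvalH, ← Subgroup.inf_relIndex_left]
    exact Subgroup.card_mul_relIndex inf_le_left
  have hA : 0 < Nat.card (L ⊓ conjSG L g : Subgroup G) := Nat.card_pos
  exact ⟨⟨hAB, hBC⟩, hAC, by omega, by omega⟩

/-- **Lemma 5.2 (group-theoretic core).**  Let `L ≤ H` be finite subgroups of `G` and
`g ∈ G` with `g² ∈ L`.  Assume `|L : L ∩ L^g| = |H : H ∩ H^g| = 4` and
`L ∩ L^g ≠ L ∩ H^g` (the pseudocover condition).  Then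
`L ∩ L^g < L ∩ H^g < H ∩ H^g` is a chain of proper inclusions, so
`|H ∩ H^g| ≥ 4 |L ∩ L^g|`, and hence `|H| ≥ 16 |L ∩ L^g| ≥ 16`. -/
theorem pseudocover_stabilizer_bound {G : Type*} [Group G] (L H : Subgroup G) (hLH : L ≤ H)
    (hLfin : (L : Set G).Finite) (hHfin : (H : Set G).Finite)
    (g : G) (hg2 : g ^ 2 ∈ L)
    (hvalL : (conjSG L g).relIndex L = 4) (hvalH : (conjSG H g).relIndex H = 4)
    (hne : L ⊓ conjSG L g ≠ L ⊓ conjSG H g) :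
    (L ⊓ conjSG L g < L ⊓ conjSG H g ∧ L ⊓ conjSG H g < H ⊓ conjSG H g) ∧
    4 * Nat.card (L ⊓ conjSG L g : Subgroup G) ≤ Nat.card (H ⊓ conjSG H g : Subgroup G) ∧
    16 * Nat.card (L ⊓ conjSG L g : Subgroup G) ≤ Nat.card H ∧
    16 ≤ Nat.card H :=
  pseudocover_stabilizer_bound_general L H hLH hHfin g hg2 hvalH hne
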